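/- Let q₀(l) = Σ_{n > ⌊(l−1)/2⌋} C_n / (2·4^n) for integers l ≥ 1; that is, q₀(l) = P(2X⁰+1 > l) where X⁰ has distribution P(X⁰ = n) = C_n/(2·4^n). Then lim_{l→∞} √(π·l/2) · q₀(l) = 1; equivalently, P(Y⁰ ≥ l) ~ √(2/(π·l)) as l → ∞, where Y⁰ = 2X⁰ + 1. -/

import Mathlib

open Filter Real
open scoped Topology Nat

noncomputable section

/-- `q₀(l) = P(Y⁰ > l) = Σ_{n > ⌊(l-1)/2⌋} C_n / (2·4^n)`, where `Y⁰ = 2X⁰ + 1` and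
`X⁰` has the critical Catalan distribution `P(X⁰ = n) = C_n / (2·4^n)`. -/
def q0 (l : ℕ) : ℝ := ∑' n : ℕ, if (l - 1) / 2 < n then (catalan n : ℝ) / (2 * 4 ^ n) else 0

namespace CritAux

/-- `g n = centralBinom n / 4^n`. -/
def g (n : ℕ) : ℝ := (Nat.centralBinom n : ℝ) / 4 ^ n

lemma g_pos (n : ℕ) : 0 < g n :=
  div_pos (by exact_mod_cast Nat.centralBinom_pos n) (by positivity)

/-- Telescoping identity: `C_n/(2·4^n) = g n - g (n+1)`. -/
lemma step (n : ℕ) : (catalan n : ℝ) / (2 * 4 ^ n) = g n - g (n + 1) := by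
  have h1 : ((n : ℝ) + 1) * (catalan n : ℝ) = (Nat.centralBinom n : ℝ) := by
    exact_mod_cast congrArg (Nat.cast : ℕ → ℝ) (succ_mul_catalan_eq_centralBinom n)
  have h2 : ((n : ℝ) + 1) * (Nat.centralBinom (n + 1) : ℝ)
      = 2 * (2 * n + 1) * (Nat.centralBinom n : ℝ) := by
    exact_mod_cast congrArg (Nat.cast : ℕ → ℝ) (Nat.succ_mul_centralBinom_succ n)
  have hn : ((n : ℝ) + 1) ≠ 0 := by positivity
  have h4 : (4 : ℝ) ^ n ≠ 0 := by positivity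
  have h3 : ((n : ℝ) + 1) * (2 * (catalan n : ℝ))
      = ((n : ℝ) + 1) * (4 * (Nat.centralBinom n : ℝ) - (Nat.centralBinom (n + 1) : ℝ)) := by
    linear_combination 2 * h1 + h2
  have h5 : 2 * (catalan n : ℝ)
      = 4 * (Nat.centralBinom n : ℝ) - (Nat.centralBinom (n + 1) : ℝ) :=
    mul_left_cancel₀ hn h3
  rw [g, g, pow_succ]
  field_simp
  linear_combination 2 * h5

lemma hfact (n : ℕ) : (Nat.centralBinom n : ℝ) * ((n ! : ℝ) * (n ! : ℝ)) = ((2 * n)! : ℝ) := by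
  have h : Nat.centralBinom n * (n ! * n !) = (2 * n)! := by
    have h := Nat.choose_mul_factorial_mul_factorial (show n ≤ 2 * n by omega)
    rw [Nat.centralBinom]
    rw [show 2 * n - n = n by omega] at h
    rw [← h]; ring
  exact_mod_cast congrArg (Nat.cast : ℕ → ℝ) h

/-- Wallis-type identity: `(2n+1) g n ^ 2 = 1 / W n`. -/
lemma sq_identity (n : ℕ) : (2 * (n : ℝ) + 1) * g n ^ 2 = (Real.Wallis.W n)⁻¹ := by
  have hf := hfact n
  have hW := Real.Wallis.W_eq_factorial_ratio n
  have hp : (2 : ℝ) ^ (4 * n) = ((4 : ℝ) ^ n) ^ 2 := by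
    rw [show (4 : ℝ) = 2 ^ 2 by norm_num, ← pow_mul, ← pow_mul]; ring_nf
  have hfac : (0 : ℝ) < (n ! : ℝ) := by exact_mod_cast Nat.factorial_pos n
  have h2fac : (0 : ℝ) < ((2 * n)! : ℝ) := by exact_mod_cast Nat.factorial_pos (2 * n)
  have h4 : (0 : ℝ) < (4 : ℝ) ^ n := by positivity
  have h21 : (0 : ℝ) < 2 * (n : ℝ) + 1 := by positivity
  rw [hW, hp, g, div_pow]
  field_simp
  linear_combination
    ((Nat.centralBinom n : ℝ) * ((n ! : ℝ) * (n ! : ℝ)) + ((2 * n)! : ℝ)) * hf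

/-- Wallis limit: `π n g n ^ 2 → 1`. -/
lemma tendsto_sq : Tendsto (fun n : ℕ => π * n * g n ^ 2) atTop (𝓝 1) := by
  have hWne : (π / 2 : ℝ) ≠ 0 := by positivity
  have hWinv : Tendsto (fun n => (Real.Wallis.W n)⁻¹) atTop (𝓝 (2 / π)) := by
    have := (Real.Wallis.tendsto_W_nhds_pi_div_two).inv₀ hWne
    simpa [inv_div] using this
  have hr : Tendsto (fun n : ℕ => π * n / (2 * n + 1)) atTop (𝓝 (π / 2)) := by
    have h0 : Tendsto (fun n : ℕ => π / (2 + 1 / n)) atTop (𝓝 (π / 2)) := by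
      have : Tendsto (fun n : ℕ => 2 + 1 / (n : ℝ)) atTop (𝓝 2) := by
        simpa using (tendsto_const_nhds (x := (2 : ℝ))).add tendsto_one_div_atTop_nhds_zero_nat
      exact tendsto_const_nhds.div this two_ne_zero
    refine h0.congr' ?_
    filter_upwards [eventually_ge_atTop 1] with n hn
    have hn0 : ((n : ℝ)) ≠ 0 := Nat.cast_ne_zero.mpr (by omega)
    field_simp
  have := hr.mul hWinv
  have hlim : (π / 2) * (2 / π) = 1 := by
    field_simp
  rw [hlim] at this
  refine this.congr fun n => ?_
  rw [← sq_identity n]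
  have h21 : (2 * (n : ℝ) + 1) ≠ 0 := by positivity
  field_simp

/-- Central binomial asymptotics: `√(π n) · g n → 1`. -/
lemma tendsto_sqrt_g : Tendsto (fun n : ℕ => Real.sqrt (π * n) * g n) atTop (𝓝 1) := by
  have h := (Real.continuous_sqrt.tendsto 1).comp tendsto_sq
  rw [Real.sqrt_one] at h
  refine h.congr fun n => ?_
  show Real.sqrt (π * n * g n ^ 2) = Real.sqrt (π * n) * g n
  rw [Real.sqrt_mul (by positivity), Real.sqrt_sq (g_pos n).le]

lemma g_tendsto_zero : Tendsto g atTop (𝓝 0) := by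
  have h2 : Tendsto (fun n : ℕ => (Real.sqrt (π * n))⁻¹) atTop (𝓝 0) := by
    have hinv : Tendsto (fun n : ℕ => (π * (n : ℝ))⁻¹) atTop (𝓝 0) :=
      tendsto_inv_atTop_zero.comp
        ((tendsto_natCast_atTop_atTop (R := ℝ)).const_mul_atTop Real.pi_pos)
    have := (Real.continuous_sqrt.tendsto 0).comp hinv
    rw [Real.sqrt_zero] at this
    refine this.congr fun n => ?_
    exact Real.sqrt_inv _
  have := tendsto_sqrt_g.mul h2
  rw [one_mul] at this
  refine this.congr' ?_
  filter_upwards [eventually_ge_atTop 1] with n hn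
  have hpos : (0 : ℝ) < Real.sqrt (π * n) := by
    apply Real.sqrt_pos.mpr
    have : (0 : ℝ) < (n : ℝ) := by exact_mod_cast hn
    positivity
  field_simp

lemma hasSum_shift (m : ℕ) :
    HasSum (fun n : ℕ => (catalan (n + m) : ℝ) / (2 * 4 ^ (n + m))) (g m) := by
  rw [hasSum_iff_tendsto_nat_of_nonneg (fun i => by positivity)]
  have key : ∀ N : ℕ, ∑ i ∈ Finset.range N, (catalan (i + m) : ℝ) / (2 * 4 ^ (i + m))
      = g m - g (N + m) := by
    intro N
    have h := Finset.sum_range_sub' (f := fun i => g (i + m)) N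
    simp only [zero_add] at h
    rw [← h]
    refine Finset.sum_congr rfl fun i _ => ?_
    rw [step (i + m), show i + m + 1 = i + 1 + m by omega]
  have : Tendsto (fun N : ℕ => g m - g (N + m)) atTop (𝓝 (g m - 0)) :=
    tendsto_const_nhds.sub (g_tendsto_zero.comp (tendsto_add_atTop_nat m))
  rw [sub_zero] at this
  exact this.congr fun N => (key N).symm

lemma hasSum_tail (m : ℕ) :
    HasSum (fun n : ℕ => if m < n then (catalan n : ℝ) / (2 * 4 ^ n) else 0) (g (m + 1)) := by
  set f : ℕ → ℝ := fun n => if m < n then (catalan n : ℝ) / (2 * 4 ^ n) else 0 with hf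
  have h1 : HasSum (fun n : ℕ => f (n + (m + 1))) (g (m + 1)) := by
    refine (hasSum_shift (m + 1)).congr_fun fun n => ?_
    simp only [hf]
    rw [if_pos (by omega)]
  have h2 := (hasSum_nat_add_iff (f := f) (m + 1)).mp h1
  have h3 : ∑ i ∈ Finset.range (m + 1), f i = 0 := by
    refine Finset.sum_eq_zero fun i hi => ?_
    simp only [hf]
    rw [if_neg (by simp at hi; omega)]
  rwa [h3, add_zero] at h2

lemma q0_eq (l : ℕ) : q0 l = g ((l - 1) / 2 + 1) :=
  (hasSum_tail ((l - 1) / 2)).tsum_eq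

end CritAux
end

/-- **Tail asymptotics at criticality:** `lim_{l→∞} √(π l / 2) q₀(l) = 1`, i.e.
`P(Y⁰ ≥ l) ~ √(2/(π l))` as `l → ∞`. -/
theorem critical_tail_asymptotics :
    Tendsto (fun l : ℕ => Real.sqrt (π * l / 2) * q0 l) atTop (nhds 1) := by
  open CritAux in
  have hk : Tendsto (fun l : ℕ => (l - 1) / 2 + 1) atTop atTop := by
    apply tendsto_atTop_atTop.mpr
    intro b
    exact ⟨2 * b + 1, fun a ha => by omega⟩
  -- first factor : √(π k) g k → 1 along k = (l-1)/2 + 1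
  have h1 : Tendsto (fun l : ℕ => Real.sqrt (π * ((l - 1) / 2 + 1 : ℕ)) *
      CritAux.g ((l - 1) / 2 + 1)) atTop (𝓝 1) :=
    CritAux.tendsto_sqrt_g.comp hk
  -- second factor : √(l / (2 * k)) → 1
  have h2 : Tendsto (fun l : ℕ => (l : ℝ) / (2 * ((l - 1) / 2 + 1 : ℕ))) atTop (𝓝 1) := by
    have hlow : Tendsto (fun l : ℕ => (l : ℝ) / (l + 1)) atTop (𝓝 1) := by
      have hd : Tendsto (fun l : ℕ => 1 + 1 / (l : ℝ)) atTop (𝓝 1) := by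
        simpa using (tendsto_const_nhds (x := (1 : ℝ))).add tendsto_one_div_atTop_nhds_zero_nat
      have h0 : Tendsto (fun l : ℕ => (1 + 1 / (l : ℝ))⁻¹) atTop (𝓝 1) := by
        simpa using hd.inv₀ one_ne_zero
      refine h0.congr' ?_
      filter_upwards [eventually_ge_atTop 1] with l hl
      have hl0 : ((l : ℝ)) ≠ 0 := Nat.cast_ne_zero.mpr (by omega)
      rw [eq_div_iff (by positivity)]
      field_simp
    refine tendsto_of_tendsto_of_tendsto_of_le_of_le' hlow tendsto_const_nhds ?_ ?_
    · filter_upwards [eventually_ge_atTop 1] with l hl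
      have hAn : l ≤ 2 * ((l - 1) / 2 + 1) := by omega
      have hBn : 2 * ((l - 1) / 2 + 1) ≤ l + 1 := by omega
      have hA : (l : ℝ) ≤ 2 * (((l - 1) / 2 + 1 : ℕ) : ℝ) := by exact_mod_cast hAn
      have hB : 2 * (((l - 1) / 2 + 1 : ℕ) : ℝ) ≤ (l : ℝ) + 1 := by exact_mod_cast hBn
      have hpos : (0 : ℝ) < 2 * (((l - 1) / 2 + 1 : ℕ) : ℝ) := by positivity
      rw [div_le_div_iff₀ (by positivity) hpos]
      nlinarith [Nat.cast_nonneg (α := ℝ) l]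
    · filter_upwards [eventually_ge_atTop 1] with l hl
      have hAn : l ≤ 2 * ((l - 1) / 2 + 1) := by omega
      have hA : (l : ℝ) ≤ 2 * (((l - 1) / 2 + 1 : ℕ) : ℝ) := by exact_mod_cast hAn
      have hpos : (0 : ℝ) < 2 * (((l - 1) / 2 + 1 : ℕ) : ℝ) := by positivity
      rw [div_le_one hpos]
      exact hA
  have h2s : Tendsto (fun l : ℕ =>
      Real.sqrt ((l : ℝ) / (2 * ((l - 1) / 2 + 1 : ℕ)))) atTop (𝓝 1) := by
    have := (Real.continuous_sqrt.tendsto 1).comp h2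
    rwa [Real.sqrt_one] at this
  have := h1.mul h2s
  rw [mul_one] at this
  refine this.congr fun l => ?_
  rw [CritAux.q0_eq l]
  set k : ℕ := (l - 1) / 2 + 1
  have hkpos : (0 : ℝ) < (k : ℝ) := by positivity
  have : Real.sqrt (π * l / 2) = Real.sqrt (π * k) * Real.sqrt ((l : ℝ) / (2 * k)) := by
    rw [← Real.sqrt_mul (by positivity)]
    congr 1
    field_simp
  rw [this]
  ring
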